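/- arXiv:2005.12673 — 4 statements merged into one kernel-verified Lean document; each statement's English description precedes it below -/
import Mathlib

section
/- Let F be a field, E an elliptic curve over F, d a positive integer, and P, Q two distinct F-rational points of E such that (3d−1)•P + Q = 0 and P + (3d−1)•Q = 0. Then (3d(3d−2))•P = 0, (3d(3d−2))•Q = 0, and (3d)•P ≠ 0; in particular the additive order of P divides 3d(3d−2) but does not divide 3d, and necessarily d ≥ 2. -/
/-!
Eliminating `Q = -((3d-1) • P)` from the two relations gives `((3d-1)² - 1) • P = 0`, and
`(3d-1)² - 1 = 3d(3d-2)`; by symmetry the same holds for `Q`. If also `(3d) • P = 0`, then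
`(3d-1) • P = -P`, so the first relation forces `Q = P`. For `d = 1` the two multiples
`3d(3d-2)` and `3d` coincide, which rules out `d = 1`.
-/

section AddCommGroup

variable {G : Type*} [AddCommGroup G]

theorem mul_pred_nsmul_eq_zero_of_nsmul_add_eq_zero {n : ℕ} {P Q : G}
    (h₁ : n • P + Q = 0) (h₂ : P + n • Q = 0) : ((n + 1) * (n - 1)) • P = 0 := by
  rcases n with _ | n
  · simp
  have hQ : Q = -((n + 1) • P) := eq_neg_of_add_eq_zero_right h₁
  rw [hQ, smul_neg, smul_smul, add_neg_eq_zero] at h₂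
  calc ((n + 1 + 1) * (n + 1 - 1)) • P = ((n + 1) * (n + 1)) • P - P := by
        rw [Nat.add_sub_cancel, eq_sub_iff_add_eq, ← succ_nsmul]
        congr 1
        ring
    _ = 0 := by rw [← h₂, sub_self]

theorem eq_of_nsmul_add_eq_zero_of_succ_nsmul_eq_zero {n : ℕ} {P Q : G}
    (h : n • P + Q = 0) (hP : (n + 1) • P = 0) : Q = P :=
  add_left_cancel (h.trans (succ_nsmul P n ▸ hP).symm)

end AddCommGroup

open scoped Classical in
theorem stmt_6_general {F : Type*} [Field F] (W : WeierstrassCurve F)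
    (d : ℕ) (hd : 0 < d) (P Q : W.toAffine.Point) (hPQ : P ≠ Q)
    (h1 : (3 * d - 1) • P + Q = 0) (h2 : P + (3 * d - 1) • Q = 0) :
    (3 * d * (3 * d - 2)) • P = 0 ∧ (3 * d * (3 * d - 2)) • Q = 0 ∧
      (3 * d) • P ≠ 0 ∧
      addOrderOf P ∣ 3 * d * (3 * d - 2) ∧ ¬ addOrderOf P ∣ 3 * d ∧ 2 ≤ d := by
  have hsucc : 3 * d - 1 + 1 = 3 * d := by omega
  have hpred : 3 * d - 1 - 1 = 3 * d - 2 := by omega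
  have hP : (3 * d * (3 * d - 2)) • P = 0 := by
    simpa only [hsucc, hpred] using mul_pred_nsmul_eq_zero_of_nsmul_add_eq_zero h1 h2
  have hQ : (3 * d * (3 * d - 2)) • Q = 0 := by
    simpa only [hsucc, hpred] using
      mul_pred_nsmul_eq_zero_of_nsmul_add_eq_zero (n := 3 * d - 1) (by rwa [add_comm] at h2) (by rwa [add_comm] at h1)
  have h3P : (3 * d) • P ≠ 0 := fun h ↦
    hPQ (eq_of_nsmul_add_eq_zero_of_succ_nsmul_eq_zero h1 (hsucc ▸ h)).symm
  refine ⟨hP, hQ, h3P, addOrderOf_dvd_of_nsmul_eq_zero hP,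
    fun h ↦ h3P (addOrderOf_dvd_iff_nsmul_eq_zero.mp h), ?_⟩
  by_contra! hd1
  obtain rfl : d = 1 := by omega
  exact h3P hP

open scoped Classical in
/-- If `P ≠ Q` are points on an elliptic curve with `(3d-1) • P + Q = 0` and
`P + (3d-1) • Q = 0` for a positive integer `d`, then `(3d(3d-2)) • P = 0`,
`(3d(3d-2)) • Q = 0`, `(3d) • P ≠ 0`; in particular `addOrderOf P ∣ 3d(3d-2)`,
`¬ addOrderOf P ∣ 3d`, and `d ≥ 2`. -/
theorem stmt_6 {F : Type*} [Field F] (W : WeierstrassCurve F) [W.IsElliptic]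
    (d : ℕ) (hd : 0 < d) (P Q : W.toAffine.Point) (hPQ : P ≠ Q)
    (h1 : (3 * d - 1) • P + Q = 0) (h2 : P + (3 * d - 1) • Q = 0) :
    (3 * d * (3 * d - 2)) • P = 0 ∧ (3 * d * (3 * d - 2)) • Q = 0 ∧
      (3 * d) • P ≠ 0 ∧
      addOrderOf P ∣ 3 * d * (3 * d - 2) ∧ ¬ addOrderOf P ∣ 3 * d ∧ 2 ≤ d :=
  stmt_6_general W d hd P Q hPQ h1 h2
end

section
/- Let F be a field, E an elliptic curve over F, and P, Q two distinct F-rational points of E such that 8•P + Q = 0 and P + 8•Q = 0. Then the additive order of P belongs to {7, 21, 63}, and the additive order of P + Q equals (addOrderOf P) / gcd(addOrderOf P, 7); in particular it is 1, 3 or 9 according as the additive order of P is 7, 21 or 63. -/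
/-!
Only the group law of `E` matters. Writing `8 = m + 1`, the first relation gives
`Q = -((m + 1) • P)`, and substituting into the second gives `(m * (m + 2)) • P = 0`, i.e.
`63 • P = 0`. Moreover `Q = P - (m + 2) • P`, so `P ≠ Q` means `9 • P ≠ 0`; the divisors of `63`
not dividing `9` are `7, 21, 63`. Finally `P + Q = -(7 • P)`, whose order is
`addOrderOf P / gcd (addOrderOf P) 7`.
-/

section
variable {G : Type*} [AddCommGroup G] {P Q : G} {m : ℕ}

theorem addOrderOf_dvd_mul_add_two_of_succ_nsmul (h1 : (m + 1) • P + Q = 0)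
    (h2 : P + (m + 1) • Q = 0) : addOrderOf P ∣ m * (m + 2) := by
  rw [addOrderOf_dvd_iff_nsmul_eq_zero]
  rw [eq_neg_of_add_eq_zero_right h1] at h2
  rw [← neg_eq_zero, ← h2]
  module

theorem add_two_nsmul_ne_zero_of_ne (hPQ : P ≠ Q) (h1 : (m + 1) • P + Q = 0) :
    (m + 2) • P ≠ 0 := by
  intro h
  apply hPQ
  rw [eq_neg_of_add_eq_zero_right h1, ← sub_eq_zero, ← h]
  module

theorem addOrderOf_add_of_succ_nsmul (hm : m ≠ 0) (h1 : (m + 1) • P + Q = 0) :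
    addOrderOf (P + Q) = addOrderOf P / (addOrderOf P).gcd m := by
  have hsum : P + Q = -(m • P) := by
    rw [eq_neg_of_add_eq_zero_right h1]
    module
  rw [hsum, addOrderOf_neg, addOrderOf_nsmul' P hm]

end

theorem mem_of_dvd_sixtyThree_of_not_dvd_nine {d : ℕ} (h63 : d ∣ 63) (h9 : ¬ d ∣ 9) :
    d ∈ ({7, 21, 63} : Set ℕ) := by
  have hd : d ≤ 63 := Nat.le_of_dvd (by norm_num) h63
  interval_cases d <;> simp_all

open Classical in
theorem stmt_10_general {F : Type*} [Field F] (W : WeierstrassCurve F)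
    (P Q : W.toAffine.Point) (hPQ : P ≠ Q)
    (h1 : 8 • P + Q = 0) (h2 : P + 8 • Q = 0) :
    addOrderOf P ∈ ({7, 21, 63} : Set ℕ) ∧
      addOrderOf (P + Q) = addOrderOf P / Nat.gcd (addOrderOf P) 7 ∧
      (addOrderOf P = 7 → addOrderOf (P + Q) = 1) ∧
      (addOrderOf P = 21 → addOrderOf (P + Q) = 3) ∧
      (addOrderOf P = 63 → addOrderOf (P + Q) = 9) := by
  have hdvd : addOrderOf P ∣ 63 := addOrderOf_dvd_mul_add_two_of_succ_nsmul (m := 7) h1 h2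
  have hndvd : ¬ addOrderOf P ∣ 9 := fun h ↦
    add_two_nsmul_ne_zero_of_ne (m := 7) hPQ h1 (addOrderOf_dvd_iff_nsmul_eq_zero.mp h)
  have hord : addOrderOf (P + Q) = addOrderOf P / Nat.gcd (addOrderOf P) 7 :=
    addOrderOf_add_of_succ_nsmul (m := 7) (by norm_num) h1
  refine ⟨mem_of_dvd_sixtyThree_of_not_dvd_nine hdvd hndvd, hord, ?_, ?_, ?_⟩ <;>
    intro h <;> rw [hord, h] <;> norm_num

open Classical in
/-- If `P ≠ Q` are points on an elliptic curve with `8 • P + Q = 0` and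
`P + 8 • Q = 0`, then `addOrderOf P ∈ {7, 21, 63}` and
`addOrderOf (P + Q) = addOrderOf P / gcd (addOrderOf P) 7`; in particular it is `1`, `3`
or `9` according as `addOrderOf P` is `7`, `21` or `63`. -/
theorem stmt_10 {F : Type*} [Field F] (W : WeierstrassCurve F) [W.IsElliptic]
    (P Q : W.toAffine.Point) (hPQ : P ≠ Q)
    (h1 : 8 • P + Q = 0) (h2 : P + 8 • Q = 0) :
    addOrderOf P ∈ ({7, 21, 63} : Set ℕ) ∧
      addOrderOf (P + Q) = addOrderOf P / Nat.gcd (addOrderOf P) 7 ∧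
      (addOrderOf P = 7 → addOrderOf (P + Q) = 1) ∧
      (addOrderOf P = 21 → addOrderOf (P + Q) = 3) ∧
      (addOrderOf P = 63 → addOrderOf (P + Q) = 9) :=
  stmt_10_general W P Q hPQ h1 h2
end

section
/- Let a₁, …, a_k be integers with gcd(a₁, …, a_k) = 1 and let m₁, …, m_k, d₁, …, d_k be positive integers. Set n_a := gcd(a₁·m₁, …, a_k·m_k, Σ_j a_j·d_j) and assume n_a ≥ 2. Set b′_j := a_j − n_a·⌊a_j/n_a⌋, κ := gcd(b′₁, …, b′_k), b_j := b′_j/κ, and n_b := gcd(b₁·m₁, …, b_k·m_k, Σ_j b_j·d_j). Then n_a divides n_b. -/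
/-!
Reduction mod `n_a` leaves `a` unchanged, so `b' ≡ a` componentwise, and the conditions
`n_a ∣ v_j m_j`, `n_a ∣ Σ v_j d_j` only depend on `v` modulo `n_a`; hence they hold for `b'`.
Any common divisor of `n_a` and `κ` divides every `a_j = (a_j - b'_j) + b'_j`, so `κ` is a unit
mod `n_a` and the conditions pass from `b' = κ b` to `b`.
-/

open Finset

variable {ι : Type*}

theorem natCast_dvd_gcd_iff_zmod [Fintype ι] (n : ℕ) (v : ι → ℤ) (m d : ι → ℕ) :
    n ∣ Int.gcd (univ.gcd fun j => v j * (m j : ℤ)) (∑ j, v j * (d j : ℤ)) ↔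
      (∀ j, (v j : ZMod n) * m j = 0) ∧ ∑ j, (v j : ZMod n) * d j = 0 := by
  simp only [Int.dvd_gcd_iff, Finset.dvd_gcd_iff, mem_univ, true_implies,
    ← ZMod.intCast_zmod_eq_zero_iff_dvd]
  push_cast
  rfl

theorem isCoprime_of_gcd_eq_one_of_dvd_sub {s : Finset ι} {a b : ι → ℤ} {n c : ℤ}
    (ha : s.gcd a = 1) (hab : ∀ j ∈ s, n ∣ a j - b j) (hcb : ∀ j ∈ s, c ∣ b j) :
    IsCoprime n c := by
  have hgcd : (Int.gcd n c : ℤ) ∣ 1 := ha ▸ Finset.dvd_gcd fun j hj => by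
    simpa using dvd_add ((Int.gcd_dvd_left n c).trans (hab j hj))
      ((Int.gcd_dvd_right n c).trans (hcb j hj))
  exact Int.isCoprime_iff_gcd_eq_one.2 (Nat.dvd_one.1 (by exact_mod_cast hgcd))

theorem stmt_13_general (k : ℕ) (a : Fin k → ℤ)
    (ha : Finset.univ.gcd a = 1)
    (m d : Fin k → ℕ)
    (na : ℕ)
    (hna : na = Int.gcd (Finset.univ.gcd fun j => a j * (m j : ℤ))
      (∑ j, a j * (d j : ℤ)))
    (b' : Fin k → ℤ) (hb' : ∀ j, b' j = a j - (na : ℤ) * (a j / (na : ℤ)))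
    (κ : ℤ) (hκ : κ = Finset.univ.gcd b')
    (b : Fin k → ℤ) (hb : ∀ j, b j = b' j / κ)
    (nb : ℕ)
    (hnb : nb = Int.gcd (Finset.univ.gcd fun j => b j * (m j : ℤ))
      (∑ j, b j * (d j : ℤ))) :
    na ∣ nb := by
  have hb'_mod : ∀ j, b' j = a j % na := fun j => (hb' j).trans (Int.emod_def _ _).symm
  have hκ_dvd : ∀ j, κ ∣ b' j := fun j => hκ ▸ Finset.gcd_dvd (mem_univ j)
  have hκ_unit : IsUnit (κ : ZMod na) := by
    obtain ⟨u, v, huv⟩ := isCoprime_of_gcd_eq_one_of_dvd_sub ha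
      (fun j _ => hb'_mod j ▸ Int.dvd_self_sub_emod) (fun j _ => hκ_dvd j)
    refine IsUnit.of_mul_eq_one_right (v : ZMod na) ?_
    simpa using congrArg (Int.cast : ℤ → ZMod na) huv
  have hb_cast : ∀ j, (b j : ZMod na) = ↑hκ_unit.unit⁻¹ * a j := fun j => by
    rw [Units.eq_inv_mul_iff_mul_eq, IsUnit.unit_spec, ← ZMod.intCast_mod (a j), ← hb'_mod,
      hb j, ← Int.cast_mul, Int.mul_ediv_cancel' (hκ_dvd j)]
  obtain ⟨ham, had⟩ := (natCast_dvd_gcd_iff_zmod na a m d).1 (hna ▸ dvd_refl na)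
  rw [hnb, natCast_dvd_gcd_iff_zmod]
  simp only [hb_cast, mul_assoc, ← Finset.mul_sum, ham, had, mul_zero, implies_true, and_self]

/-- With `gcd (a₁, …, a_k) = 1`, `m_j, d_j` positive,
`n_a := gcd (a_jm_j, Σ a_jd_j) ≥ 2`, `b'_j := a_j - n_a·⌊a_j/n_a⌋`,
`κ := gcd (b'_j)`, `b_j := b'_j/κ` and `n_b := gcd (b_jm_j, Σ b_jd_j)`,
one has `n_a ∣ n_b`. -/
theorem stmt_13 (k : ℕ) (hk : 0 < k) (a : Fin k → ℤ)
    (ha : Finset.univ.gcd a = 1)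
    (m d : Fin k → ℕ) (hm : ∀ j, 0 < m j) (hd : ∀ j, 0 < d j)
    (na : ℕ)
    (hna : na = Int.gcd (Finset.univ.gcd fun j => a j * (m j : ℤ))
      (∑ j, a j * (d j : ℤ)))
    (hna2 : 2 ≤ na)
    (b' : Fin k → ℤ) (hb' : ∀ j, b' j = a j - (na : ℤ) * (a j / (na : ℤ)))
    (κ : ℤ) (hκ : κ = Finset.univ.gcd b')
    (b : Fin k → ℤ) (hb : ∀ j, b j = b' j / κ)
    (nb : ℕ)
    (hnb : nb = Int.gcd (Finset.univ.gcd fun j => b j * (m j : ℤ))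
      (∑ j, b j * (d j : ℤ))) :
    na ∣ nb :=
  stmt_13_general k a ha m d na hna b' hb' κ hκ b hb nb hnb
end

section
/- Let a₁, …, a_k be integers with gcd(a₁, …, a_k) = 1, let m₁, …, m_k, d₁, …, d_k be positive integers, set n_a := gcd(a₁·m₁, …, a_k·m_k, Σ_j a_j·d_j) and assume n_a ≥ 2; set b′_j := a_j − n_a·⌊a_j/n_a⌋, κ := gcd(b′₁, …, b′_k), b_j := b′_j/κ, and n_b := gcd(b₁·m₁, …, b_k·m_k, Σ_j b_j·d_j). Let A be an additive commutative group and t₁, …, t_k ∈ A with m_j • t_j = 0 for every j. Then Σ_{j=1}^k ((a_j·m_j)/n_a) • t_j = ((κ·n_b)/n_a) • ( Σ_{j=1}^k ((b_j·m_j)/n_b) • t_j ). -/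
/-!
Write `b'_j = a_j mod n_a = κ b_j`. Since `m_j • t_j = 0`, replacing `a_j` by its residue `b'_j`
does not change `((a_j m_j)/n_a) • t_j`: the two quotients differ by a multiple of `m_j`.
Reducing `a` modulo `n_a` keeps `n_a ∣ gcd (b'_j m_j, Σ b'_j d_j) = |κ| n_b`, so `n_a ∣ κ n_b`,
and then the factor `(κ n_b)/n_a` combines exactly with `(b_j m_j)/n_b` into `(b'_j m_j)/n_a`.
-/

namespace Int

theorem emod_mul_ediv_smul_of_smul_eq_zero {A : Type*} [AddCommGroup A] {t : A} {m : ℤ}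
    (ht : m • t = 0) (x n : ℤ) : (x % n * m / n) • t = (x * m / n) • t := by
  rcases eq_or_ne n 0 with rfl | hn
  · simp
  conv_rhs => rw [← emod_add_mul_ediv x n, add_mul, mul_assoc, add_mul_ediv_left _ _ hn]
  rw [add_smul, mul_smul, ht, smul_zero, add_zero]

theorem mul_ediv_mul_ediv_cancel {n c N x : ℤ} (hn : n ∣ c * N) (hN : N ∣ x) :
    c * N / n * (x / N) = c * x / n := by
  obtain ⟨y, rfl⟩ := hN
  rcases eq_or_ne N 0 with rfl | hN
  · simp
  rw [mul_ediv_cancel_left _ hN, ← Int.mul_ediv_assoc' _ hn, mul_assoc]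

end Int

/-- The integer `n_a` of the paper, for the tuple `a` and the data `m`, `d`. -/
def tupleGcd {ι : Type*} [Fintype ι] (a m d : ι → ℤ) : ℕ :=
  Int.gcd (Finset.univ.gcd fun j => a j * m j) (∑ j, a j * d j)

section TupleGcd

variable {ι : Type*} [Fintype ι] (a m d : ι → ℤ)

theorem dvd_tupleGcd_iff {n : ℤ} :
    n ∣ tupleGcd a m d ↔ (∀ j, n ∣ a j * m j) ∧ n ∣ ∑ j, a j * d j := by
  simp [tupleGcd, Int.dvd_coe_gcd_iff, Finset.dvd_gcd_iff]

theorem tupleGcd_mul_left (c : ℤ) :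
    tupleGcd (fun j => c * a j) m d = c.natAbs * tupleGcd a m d := by
  simp only [tupleGcd, Int.gcd, mul_assoc, Finset.gcd_mul_left, ← Finset.mul_sum, Int.natAbs_mul,
    ← Int.abs_eq_normalize, Int.natAbs_abs, Nat.gcd_mul_left]

variable {a}

theorem dvd_tupleGcd_iff_of_modEq {a' : ι → ℤ} {n : ℤ} (h : ∀ j, a j ≡ a' j [ZMOD n]) :
    n ∣ tupleGcd a m d ↔ n ∣ tupleGcd a' m d := by
  simp only [dvd_tupleGcd_iff]
  refine and_congr (forall_congr' fun j => ((h j).mul_right _).dvd_iff) ?_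
  exact (Int.ModEq.sum fun j _ => (h j).mul_right _).dvd_iff

end TupleGcd

theorem stmt_15_general (k : ℕ) (a : Fin k → ℤ)
    (m d : Fin k → ℕ)
    (na : ℕ)
    (hna : na = Int.gcd (Finset.univ.gcd fun j => a j * (m j : ℤ))
      (∑ j, a j * (d j : ℤ)))
    (b' : Fin k → ℤ) (hb' : ∀ j, b' j = a j - (na : ℤ) * (a j / (na : ℤ)))
    (κ : ℤ) (hκ : κ = Finset.univ.gcd b')
    (b : Fin k → ℤ) (hb : ∀ j, b j = b' j / κ)
    (nb : ℕ)
    (hnb : nb = Int.gcd (Finset.univ.gcd fun j => b j * (m j : ℤ))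
      (∑ j, b j * (d j : ℤ)))
    {A : Type*} [AddCommGroup A] (t : Fin k → A)
    (ht : ∀ j, (m j : ℤ) • t j = 0) :
    ∑ j, ((a j * (m j : ℤ)) / (na : ℤ)) • t j =
      ((κ * (nb : ℤ)) / (na : ℤ)) • ∑ j, ((b j * (m j : ℤ)) / (nb : ℤ)) • t j := by
  have hna : na = tupleGcd a (m ·) (d ·) := hna
  have hnb : nb = tupleGcd b (m ·) (d ·) := hnb
  have hb'_emod : ∀ j, b' j = a j % na := fun j => by rw [hb', Int.emod_def]
  have hκb : b' = fun j => κ * b j := funext fun j =>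
    (hb j ▸ Int.mul_ediv_cancel' (hκ ▸ Finset.gcd_dvd (Finset.mem_univ j))).symm
  have hna_dvd : (na : ℤ) ∣ κ * nb := by
    have h : (na : ℤ) ∣ tupleGcd b' (m ·) (d ·) :=
      (dvd_tupleGcd_iff_of_modEq _ _ fun j => hb'_emod j ▸ (Int.mod_modEq _ _).symm).1
        (by rw [← hna])
    rw [hκb, tupleGcd_mul_left, ← hnb, Int.natCast_dvd_natCast] at h
    rwa [Int.natCast_dvd, Int.natAbs_mul, Int.natAbs_natCast]
  have hnb_dvd : ∀ j, (nb : ℤ) ∣ b j * m j := ((dvd_tupleGcd_iff _ _ _).1 (by rw [← hnb])).1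
  rw [Finset.smul_sum]
  refine Finset.sum_congr rfl fun j _ => ?_
  rw [smul_smul, Int.mul_ediv_mul_ediv_cancel hna_dvd (hnb_dvd j), ← mul_assoc,
    show κ * b j = b' j from congrFun hκb.symm j, hb'_emod,
    Int.emod_mul_ediv_smul_of_smul_eq_zero (ht j)]

/-- With the notation of Lemma 2.8(ii) of the paper: `gcd (a) = 1`, `m_j, d_j`
positive, `n_a := gcd (a_jm_j, Σ a_jd_j) ≥ 2`, `b'_j` the residues of `a_j` mod `n_a`,
`κ := gcd (b'_j)`, `b_j := b'_j/κ`, `n_b := gcd (b_jm_j, Σ b_jd_j)`, and `t_j` elements of an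
additive commutative group with `m_j • t_j = 0`, one has
`Σ_j ((a_jm_j)/n_a) • t_j = ((κ·n_b)/n_a) • (Σ_j ((b_jm_j)/n_b) • t_j)`. -/
theorem stmt_15 (k : ℕ) (hk : 0 < k) (a : Fin k → ℤ)
    (ha : Finset.univ.gcd a = 1)
    (m d : Fin k → ℕ) (hm : ∀ j, 0 < m j) (hd : ∀ j, 0 < d j)
    (na : ℕ)
    (hna : na = Int.gcd (Finset.univ.gcd fun j => a j * (m j : ℤ))
      (∑ j, a j * (d j : ℤ)))
    (hna2 : 2 ≤ na)
    (b' : Fin k → ℤ) (hb' : ∀ j, b' j = a j - (na : ℤ) * (a j / (na : ℤ)))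
    (κ : ℤ) (hκ : κ = Finset.univ.gcd b')
    (b : Fin k → ℤ) (hb : ∀ j, b j = b' j / κ)
    (nb : ℕ)
    (hnb : nb = Int.gcd (Finset.univ.gcd fun j => b j * (m j : ℤ))
      (∑ j, b j * (d j : ℤ)))
    {A : Type*} [AddCommGroup A] (t : Fin k → A)
    (ht : ∀ j, (m j : ℤ) • t j = 0) :
    ∑ j, ((a j * (m j : ℤ)) / (na : ℤ)) • t j =
      ((κ * (nb : ℤ)) / (na : ℤ)) • ∑ j, ((b j * (m j : ℤ)) / (nb : ℤ)) • t j :=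
  stmt_15_general k a m d na hna b' hb' κ hκ b hb nb hnb t ht
end
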